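/- Let X be a Banach space and let A be a closed linear operator in X such that for every t > 0 one has −t ∈ ρ(A), i.e. t + A : D(A) → X is bijective with bounded inverse (t+A)^{-1} ∈ L(X), and suppose that M := sup_{t>0} ‖t(t+A)^{-1}‖_{L(X)} < ∞. If the range R(A) = {Ax : x ∈ D(A)} is dense in X, then A is injective. -/
import Mathlib

/- STATEMENT 3: a sectorial-type operator (uniform bound on `t(t+A)⁻¹` for `t > 0`)
with dense range is injective. Unbounded operators in a Banach space `X` are
formalized as `LinearPMap`s `X →ₗ.[ℂ] X`; `IsPlusInv A t R` expresses that
`t + A : D(A) → X` is bijective with bounded inverse `R = (t + A)⁻¹ ∈ L(X)`. -/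

/-- `R ∈ L(X)` is the bounded inverse `(lam + A)⁻¹` of `lam + A` (equivalently, `-lam ∈ ρ(A)`). -/
structure IsPlusInv {X : Type*} [NormedAddCommGroup X] [NormedSpace ℂ X]
    (A : X →ₗ.[ℂ] X) (lam : ℂ) (R : X →L[ℂ] X) : Prop where
  mem : ∀ x : X, R x ∈ A.domain
  right_inv : ∀ x : X, lam • R x + A ⟨R x, mem x⟩ = x
  left_inv : ∀ y : A.domain, R (lam • (y : X) + A y) = (y : X)

theorem stmt_3 {X : Type*} [NormedAddCommGroup X] [NormedSpace ℂ X] [CompleteSpace X]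
    (A : X →ₗ.[ℂ] X) (hAclosed : A.IsClosed)
    (R : ℝ → (X →L[ℂ] X))
    (hR : ∀ t : ℝ, 0 < t → IsPlusInv A (t : ℂ) (R t))
    (M : ℝ) (hM : ∀ t : ℝ, 0 < t → ‖(t : ℂ) • R t‖ ≤ M)
    (hdense : Dense (Set.range fun x : A.domain => A x)) :
    ∀ x : A.domain, A x = 0 → (x : X) = 0 := by
  intro x hx
  have hM0 : 0 ≤ M := le_trans (norm_nonneg _) (hM 1 one_pos)
  -- x = t R(t) x for all t > 0
  have hfix : ∀ t : ℝ, 0 < t → (t : ℂ) • (R t (x : X)) = (x : X) := by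
    intro t ht
    have h := (hR t ht).left_inv x
    rw [hx, add_zero, map_smul] at h
    exact h
  -- key: R t (A z) = z - t • R t z
  have hRA : ∀ (t : ℝ), 0 < t → ∀ z : A.domain,
      R t (A z) = (z : X) - (t : ℂ) • R t (z : X) := by
    intro t ht z
    have h := (hR t ht).left_inv z
    rw [map_add, map_smul] at h
    rw [eq_sub_iff_add_eq, add_comm]
    exact h
  -- conclude ‖x‖ ≤ ε for all ε > 0
  have key : ∀ ε : ℝ, 0 < ε → ‖(x : X)‖ ≤ ε := by
    intro ε hε
    have hδ : 0 < ε / (2 * (M + 1)) := by positivity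
    obtain ⟨y, hyb, z, rfl⟩ := Metric.dense_iff.mp hdense (x : X) _ hδ
    rw [Metric.mem_ball, dist_eq_norm] at hyb
    have hy : ‖A z - (x : X)‖ < ε / (2 * (M + 1)) := hyb
    set δ := ε / (2 * (M + 1)) with hδdef
    -- choose t small
    set t : ℝ := ε / (2 * ((1 + M) * ‖(z : X)‖ + 1)) with htdef
    have ht : 0 < t := by positivity
    have h1 : (x : X) = ((t : ℂ) • R t) ((x : X) - A z) + ((t : ℂ) • R t) (A z) := by
      rw [← map_add, sub_add_cancel]
      exact (hfix t ht).symm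
    have h2 : ‖((t : ℂ) • R t) ((x : X) - A z)‖ ≤ M * δ := by
      calc ‖((t : ℂ) • R t) ((x : X) - A z)‖ ≤ ‖(t : ℂ) • R t‖ * ‖(x : X) - A z‖ :=
            ContinuousLinearMap.le_opNorm _ _
        _ ≤ M * δ := by
            rw [norm_sub_rev]
            exact mul_le_mul (hM t ht) (le_of_lt hy) (norm_nonneg _) hM0
    have h3 : ‖((t : ℂ) • R t) (A z)‖ ≤ t * ((1 + M) * ‖(z : X)‖) := by
      have : ((t : ℂ) • R t) (A z) = (t : ℂ) • ((z : X) - (t : ℂ) • R t (z : X)) := by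
        simp [hRA t ht z]
      rw [this, norm_smul]
      have habs : ‖(t : ℂ)‖ = t := by
        rw [Complex.norm_real, Real.norm_eq_abs, abs_of_pos ht]
      rw [habs]
      apply mul_le_mul_of_nonneg_left _ ht.le
      calc ‖(z : X) - (t : ℂ) • R t (z : X)‖ ≤ ‖(z : X)‖ + ‖(t : ℂ) • R t (z : X)‖ :=
            norm_sub_le _ _
        _ ≤ ‖(z : X)‖ + M * ‖(z : X)‖ := by
            gcongr
            exact ((t : ℂ) • R t).le_of_opNorm_le (hM t ht) _
        _ = (1 + M) * ‖(z : X)‖ := by ring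
    have hMδ : M * δ ≤ ε / 2 := by
      show M * (ε / (2 * (M + 1))) ≤ ε / 2
      rw [mul_comm, div_mul_eq_mul_div, div_le_div_iff₀ (by positivity) two_pos]
      nlinarith
    have htb : t * ((1 + M) * ‖(z : X)‖) ≤ ε / 2 := by
      show ε / (2 * ((1 + M) * ‖(z : X)‖ + 1)) * ((1 + M) * ‖(z : X)‖) ≤ ε / 2
      rw [div_mul_eq_mul_div, div_le_div_iff₀ (by positivity) two_pos]
      nlinarith [norm_nonneg (z : X), mul_nonneg (by linarith : (0:ℝ) ≤ 1 + M) (norm_nonneg (z : X))]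
    calc ‖(x : X)‖ = ‖((t : ℂ) • R t) ((x : X) - A z) + ((t : ℂ) • R t) (A z)‖ :=
          congrArg norm h1
      _ ≤ ‖((t : ℂ) • R t) ((x : X) - A z)‖ + ‖((t : ℂ) • R t) (A z)‖ := norm_add_le _ _
      _ ≤ ε / 2 + ε / 2 := add_le_add (h2.trans hMδ) (h3.trans htb)
      _ = ε := by ring
  exact norm_le_zero_iff.mp (le_of_forall_pos_le_add (fun ε hε => by
    simpa using key ε hε))
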